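/- Let G be a permutation group on a finite set Ω of size n, and let 1 ≤ k ≤ l ≤ n with l < n. If for every partial transformation t of Ω with |dom(t)| = l and rank(t) = k, the semigroup ⟨G,t⟩ is regular, then G has the (k,l)-universal transversal property. -/

import Mathlib

variable {Ω : Type*} [Fintype Ω] [DecidableEq Ω]

/-- A partial transformation of `Ω`, encoded as a function `Ω → Option Ω`. -/
def PT (Ω : Type*) := Ω → Option Ω

/-- Composition of partial transformations: apply `f` first, then `g`. -/
def pcomp (f g : PT Ω) : PT Ω := fun x => (f x).bind g

/-- A permutation viewed as a (total) partial transformation. -/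
def ofPerm (g : Equiv.Perm Ω) : PT Ω := fun x => some (g x)

/-- The rank of a partial transformation: the cardinality of its image. -/
noncomputable def rank (u : PT Ω) : ℕ := {y : Ω | ∃ x : Ω, u x = some y}.ncard

/-- The domain of a partial transformation. -/
def dom (u : PT Ω) : Set Ω := {x : Ω | u x ≠ none}

/-- Membership in the subsemigroup of `PT Ω` generated by a set `S`. -/
inductive InGen (S : Set (PT Ω)) : PT Ω → Prop
  | base {s : PT Ω} : s ∈ S → InGen S s
  | mul {a b : PT Ω} : InGen S a → InGen S b → InGen S (pcomp a b)

/-- The generating set consisting of the permutations of `G` together with `t`. -/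
def gens (G : Subgroup (Equiv.Perm Ω)) (t : PT Ω) : Set (PT Ω) :=
  {f : PT Ω | (∃ g ∈ G, f = ofPerm g) ∨ f = t}

variable {Ω : Type*} [Fintype Ω] [DecidableEq Ω]

/-- `P` is a partition of the finite set `B` into exactly `k` nonempty parts. -/
def IsKPartition (P : Finset (Finset Ω)) (B : Finset Ω) (k : ℕ) : Prop :=
  P.card = k ∧ (∀ p ∈ P, p.Nonempty) ∧
    (∀ p ∈ P, ∀ q ∈ P, p ≠ q → Disjoint p q) ∧ P.biUnion id = B

/-- `G` has the `(k,l)`-universal transversal property. -/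
def HasUT (G : Subgroup (Equiv.Perm Ω)) (k l : ℕ) : Prop :=
  ∀ A B : Finset Ω, A.card = k → B.card = l →
    ∀ P : Finset (Finset Ω), IsKPartition P B k →
      ∃ g ∈ G, ∀ p ∈ P, ((A.image g) ∩ p).card = 1

/-- `G` is `m`-homogeneous. -/
def IsHomogeneous (G : Subgroup (Equiv.Perm Ω)) (m : ℕ) : Prop :=
  ∀ A B : Finset Ω, A.card = m → B.card = m → ∃ g ∈ G, A.image g = B

/-- Every element of the subsemigroup generated by `S` is regular in it. -/
def IsRegularSemigroup (S : Set (PT Ω)) : Prop :=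
  ∀ v : PT Ω, InGen S v → ∃ b : PT Ω, InGen S b ∧ v = pcomp (pcomp v b) v

/-!
Label the `k` parts of `P` by the `k` points of `A`: this gives a partial transformation `t` with
domain `B` and image `A`. An element `b` of `⟨G, t⟩` is a permutation `g ∈ G` or begins with some
`g ∈ G` followed by `t`, so `t = t b t` makes `a ↦ t (g a)` defined and injective on `A`. Hence `g`
maps `A` into `B`, with distinct points in distinct parts; as `A` has as many points as there are
parts, `g A` is a transversal of `P`.
-/

section PartialTransformation

variable {α : Type*}

def img (u : PT α) : Set α := {y : α | ∃ x : α, u x = some y}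

lemma rank_eq_ncard_img (u : PT α) : rank u = (img u).ncard :=
  rfl

lemma pcomp_assoc (a b c : PT α) : pcomp (pcomp a b) c = pcomp a (pcomp b c) :=
  funext fun x => Option.bind_assoc (a x) b c

lemma ofPerm_pcomp_ofPerm (g g' : Equiv.Perm α) :
    pcomp (ofPerm g) (ofPerm g') = ofPerm (g' * g) :=
  rfl

lemma pcomp_ofPerm_one (u : PT α) : pcomp u (ofPerm 1) = u :=
  funext fun x => by
    change (u x).bind _ = u x
    cases u x <;> rfl

lemma ofPerm_one_pcomp (u : PT α) : pcomp (ofPerm 1) u = u :=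
  rfl

lemma InGen.exists_eq_ofPerm_or_eq_ofPerm_pcomp {G : Subgroup (Equiv.Perm α)} {t b : PT α}
    (hb : InGen (gens G t) b) :
    ∃ g ∈ G, b = ofPerm g ∨ ∃ w, b = pcomp (ofPerm g) (pcomp t w) := by
  induction hb with
  | base hs =>
    rcases hs with ⟨g, hg, rfl⟩ | rfl
    · exact ⟨g, hg, Or.inl rfl⟩
    · exact ⟨1, one_mem G, Or.inr ⟨ofPerm 1, by rw [pcomp_ofPerm_one, ofPerm_one_pcomp]⟩⟩
  | mul _ _ iha ihb =>
    obtain ⟨g, hg, rfl | ⟨w, rfl⟩⟩ := iha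
    · obtain ⟨g', hg', rfl | ⟨w', rfl⟩⟩ := ihb
      · exact ⟨g' * g, mul_mem hg' hg, Or.inl (ofPerm_pcomp_ofPerm g g')⟩
      · exact ⟨g' * g, mul_mem hg' hg, Or.inr ⟨w', by rw [← pcomp_assoc, ofPerm_pcomp_ofPerm]⟩⟩
    · exact ⟨g, hg, Or.inr ⟨pcomp w _, by rw [pcomp_assoc, pcomp_assoc]⟩⟩

/-- The criterion `rank (t ∘ g ∘ t) = rank t` of the paper, in left-inverse form. -/
lemma exists_perm_leftInverse_of_eq_pcomp {G : Subgroup (Equiv.Perm α)} {t b : PT α}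
    (hb : InGen (gens G t) b) (htbt : t = pcomp (pcomp t b) t) :
    ∃ g ∈ G, ∃ r : PT α, ∀ a ∈ img t, (t (g a)).bind r = some a := by
  have hbt : ∀ a ∈ img t, (b a).bind t = some a := by
    rintro a ⟨x, hx⟩
    have htx := congrFun htbt x
    simp only [pcomp, hx] at htx
    exact htx.symm
  obtain ⟨g, hg, rfl | ⟨w, rfl⟩⟩ := hb.exists_eq_ofPerm_or_eq_ofPerm_pcomp
  · exact ⟨g, hg, ofPerm 1, fun a ha => (congrFun (pcomp_ofPerm_one t) (g a)).trans (hbt a ha)⟩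
  · exact ⟨g, hg, pcomp w t, fun a ha => (Option.bind_assoc _ _ _).symm.trans (hbt a ha)⟩

end PartialTransformation

section Partition

variable {α : Type*} [DecidableEq α] {B : Finset α}

def IsKPartition.toFinpartition {P : Finset (Finset α)} {k : ℕ} (hP : IsKPartition P B k) :
    Finpartition B where
  parts := P
  supIndep := Finset.supIndep_iff_pairwiseDisjoint.mpr fun p hp q hq hpq => hP.2.2.1 p hp q hq hpq
  sup_parts := (Finset.sup_eq_biUnion P id).trans hP.2.2.2
  bot_notMem h := (hP.2.1 ⊥ h).ne_empty rfl

def Finpartition.labelling (Q : Finpartition B) (c : Q.parts → α) : PT α := fun x =>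
  if hx : x ∈ B then some (c ⟨Q.part x, Q.part_mem.2 hx⟩) else none

variable (Q : Finpartition B) (c : Q.parts → α)

lemma Finpartition.labelling_of_mem {x : α} (hx : x ∈ B) :
    Q.labelling c x = some (c ⟨Q.part x, Q.part_mem.2 hx⟩) :=
  dif_pos hx

lemma Finpartition.dom_labelling : dom (Q.labelling c) = B := by
  ext x
  by_cases hx : x ∈ B <;> simp [dom, Finpartition.labelling, hx]

lemma Finpartition.img_labelling : img (Q.labelling c) = Set.range c := by
  ext y
  constructor
  · rintro ⟨x, hx⟩
    by_cases hxB : x ∈ B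
    · rw [Q.labelling_of_mem c hxB, Option.some_inj] at hx
      exact ⟨_, hx⟩
    · simp [Finpartition.labelling, hxB] at hx
  · rintro ⟨⟨p, hp⟩, rfl⟩
    obtain ⟨x, hxp⟩ := Q.nonempty_of_mem_parts hp
    refine ⟨x, ?_⟩
    rw [Q.labelling_of_mem c (Q.le hp hxp)]
    simp only [Q.part_eq_of_mem hp hxp]

lemma Finpartition.card_image_inter_eq_one {A : Finset α} (hA : A.card = Q.parts.card)
    {f : α → α} (hfB : ∀ a ∈ A, f a ∈ B) (hf : Set.InjOn (fun a => Q.part (f a)) A) :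
    ∀ p ∈ Q.parts, (A.image f ∩ p).card = 1 := by
  let φ : A → Q.parts := fun a => ⟨Q.part (f a), Q.part_mem.2 (hfB a a.2)⟩
  have hφ : Function.Bijective φ := by
    rw [Fintype.bijective_iff_injective_and_card]
    refine ⟨fun a a' h => Subtype.ext (hf a.2 a'.2 (congrArg Subtype.val h)), ?_⟩
    simp [hA]
  intro p hp
  obtain ⟨⟨a, ha⟩, hap⟩ := hφ.2 ⟨p, hp⟩
  have hpart : Q.part (f a) = p := congrArg Subtype.val hap
  rw [Finset.card_eq_one]
  refine ⟨f a, Finset.ext fun y => ⟨?_, ?_⟩⟩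
  · simp only [Finset.mem_inter, Finset.mem_image, Finset.mem_singleton]
    rintro ⟨⟨a', ha', rfl⟩, hyp⟩
    rw [hf ha' ha (by simp only [Q.part_eq_of_mem hp hyp, hpart])]
  · intro hy
    rw [Finset.mem_singleton.1 hy, Finset.mem_inter]
    exact ⟨Finset.mem_image_of_mem f ha, hpart ▸ Q.mem_part (hfB a ha)⟩

end Partition

theorem regular_implies_ut_general (G : Subgroup (Equiv.Perm Ω)) (k l : ℕ)
    (h : ∀ t : PT Ω, (dom t).ncard = l → rank t = k → IsRegularSemigroup (gens G t)) :
    HasUT G k l := by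
  intro A B hA hB P hP
  let Q := hP.toFinpartition
  let e : Q.parts ≃ A := Finset.equivOfCardEq (hP.1.trans hA.symm)
  let t := Q.labelling fun p => (e p : Ω)
  have himg : img t = A := by
    rw [Q.img_labelling]
    ext y
    refine ⟨?_, fun hy => ⟨e.symm ⟨y, hy⟩, by simp⟩⟩
    rintro ⟨p, rfl⟩
    exact (e p).2
  obtain ⟨b, hb, htbt⟩ := h t (by rw [Q.dom_labelling, Set.ncard_coe_finset, hB])
    (by rw [rank_eq_ncard_img, himg, Set.ncard_coe_finset, hA]) t (InGen.base (Or.inr rfl))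
  obtain ⟨g, hg, r, hr⟩ := exists_perm_leftInverse_of_eq_pcomp hb htbt
  have hgB : ∀ a ∈ A, g a ∈ B := fun a ha => by
    by_contra hgaB
    have hnone := hr a (himg ▸ ha)
    rw [show t (g a) = none from dif_neg hgaB] at hnone
    cases hnone
  refine ⟨g, hg, Q.card_image_inter_eq_one (hA.trans hP.1.symm) hgB fun a ha a' ha' hpart => ?_⟩
  have htg : t (g a) = t (g a') := by
    simp only [t, Q.labelling_of_mem _ (hgB a ha), Q.labelling_of_mem _ (hgB a' ha'), hpart]
  exact Option.some_inj.1 ((hr a (himg ▸ ha)).symm.trans (htg ▸ hr a' (himg ▸ ha')))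

theorem regular_implies_ut (G : Subgroup (Equiv.Perm Ω)) (k l : ℕ)
    (hk : 1 ≤ k) (hkl : k ≤ l) (hln : l < Fintype.card Ω)
    (h : ∀ t : PT Ω, (dom t).ncard = l → rank t = k → IsRegularSemigroup (gens G t)) :
    HasUT G k l :=
  regular_implies_ut_general G k l h
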